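/- arXiv:2302.04356 — 2 statements merged into one kernel-verified Lean document; each statement's English description precedes it below -/
import Mathlib

section
/- There exists a constant C > 0 such that for every x ∈ (0,∞) and every 0 < r ≤ x, γ_α((x−r, x+r)) ≤ C r. -/
open MeasureTheory

/-- The Laguerre probability measure `γ_α` on `(0,∞)`. -/
noncomputable def gammaMeasure (α : ℝ) : Measure ℝ :=
  (volume.restrict (Set.Ioi (0 : ℝ))).withDensity
    fun x => ENNReal.ofReal (2 / Real.Gamma (α + 1) * Real.exp (-x ^ 2) * x ^ (2 * α + 1))

/-! For `α > -1/2` the exponent `β = 2α + 1` is positive, so the density of `γ_α` is bounded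
on `(0,∞)`: `t ^ β e^{-t²} ≤ e^{βt - t²} ≤ e^{β²/4}`. Hence `γ_α` is dominated by a multiple
of Lebesgue measure, and an interval of length `2r` has `γ_α`-measure `O(r)`. -/

theorem Real.rpow_mul_exp_neg_sq_le {β t : ℝ} (hβ : 0 ≤ β) (ht : 0 < t) :
    t ^ β * Real.exp (-t ^ 2) ≤ Real.exp (β ^ 2 / 4) := by
  rw [Real.rpow_def_of_pos ht, ← Real.exp_add, Real.exp_le_exp]
  have hlog : β * Real.log t ≤ β * t :=
    mul_le_mul_of_nonneg_left ((Real.log_le_sub_one_of_pos ht).trans (by linarith)) hβ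
  nlinarith [sq_nonneg (t - β / 2)]

theorem MeasureTheory.Measure.withDensity_le_smul_of_ae_le {X : Type*} [MeasurableSpace X]
    {μ : Measure X} {f : X → ENNReal} {c : ENNReal} (hf : ∀ᵐ x ∂μ, f x ≤ c) :
    μ.withDensity f ≤ c • μ :=
  (withDensity_mono hf).trans_eq (withDensity_const c)

theorem gammaMeasure_le_smul_volume {α : ℝ} (hα : -1/2 < α) :
    gammaMeasure α ≤
      ENNReal.ofReal (2 / Real.Gamma (α + 1) * Real.exp ((2 * α + 1) ^ 2 / 4)) • volume := by
  have hc : 0 ≤ 2 / Real.Gamma (α + 1) :=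
    (div_pos two_pos (Real.Gamma_pos_of_pos (by linarith))).le
  have hdensity : ∀ t ∈ Set.Ioi (0 : ℝ),
      ENNReal.ofReal (2 / Real.Gamma (α + 1) * Real.exp (-t ^ 2) * t ^ (2 * α + 1)) ≤
        ENNReal.ofReal (2 / Real.Gamma (α + 1) * Real.exp ((2 * α + 1) ^ 2 / 4)) := by
    intro t ht
    refine ENNReal.ofReal_le_ofReal ?_
    rw [mul_assoc, mul_comm (Real.exp _)]
    exact mul_le_mul_of_nonneg_left (Real.rpow_mul_exp_neg_sq_le (by linarith) ht) hc
  calc gammaMeasure α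
      ≤ _ • volume.restrict (Set.Ioi (0 : ℝ)) :=
        Measure.withDensity_le_smul_of_ae_le (ae_restrict_of_forall_mem measurableSet_Ioi hdensity)
    _ ≤ _ • volume := by gcongr; exact Measure.restrict_le_self

theorem gammaMeasure_linear_growth (α : ℝ) (hα : -1/2 < α) :
    ∃ C : ℝ, 0 < C ∧ ∀ x r : ℝ, 0 < r → r ≤ x →
      gammaMeasure α (Set.Ioo (x - r) (x + r)) ≤ ENNReal.ofReal (C * r) := by
  set M := 2 / Real.Gamma (α + 1) * Real.exp ((2 * α + 1) ^ 2 / 4)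
  have hM : 0 < M := by
    have := Real.Gamma_pos_of_pos (show 0 < α + 1 by linarith)
    positivity
  refine ⟨2 * M, by positivity, fun x r _ _ => ?_⟩
  calc gammaMeasure α (Set.Ioo (x - r) (x + r))
      ≤ (ENNReal.ofReal M • volume) (Set.Ioo (x - r) (x + r)) :=
        gammaMeasure_le_smul_volume hα _
    _ = ENNReal.ofReal (2 * M * r) := by
      rw [Measure.smul_apply, Real.volume_Ioo, smul_eq_mul, ← ENNReal.ofReal_mul hM.le]
      ring_nf
end

section
/- Let a > 0 and m(x) = min{1, 1/x}. There exists C > 0 such that for every x ∈ (0,∞) and 0 < r ≤ x with r ≤ a·m(x), one has γ_α(I(x,2r)) ≤ C γ_α((x−r, x+r)), where I(x,s) = (x−s, x+s) ∩ (0,∞). That is, γ_α is doubling on the family of a-admissible intervals. -/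
/-!
On `(0,∞)` the density of `γ_α` is `e^{-t²}` times the power weight `t^p`, `p = 2α + 1 ≥ 0`.
Admissibility of `(x - r, x + r)` gives `r ≤ a` and `r x ≤ a`, so across `I(x, 2r)` the
Gaussian factor varies by at most `e^{6a + 9a²}` and may be replaced by its values at the
endpoints. What is left is the doubling of `t^p dt`: by convexity of `t ↦ t^{p+1}`, the two
pieces of `I(x, 2r)` outside `(x - r, x + r)` each have mass at most `3^p` times that of
`(x, x + r)`.
-/

open MeasureTheory

open Set Real

section RpowIncrements

variable {p x y : ℝ}

lemma rpow_add_one_sub_rpow_add_one_le (hp : 0 ≤ p) (hx : 0 ≤ x) (hxy : x ≤ y) :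
    y ^ (p + 1) - x ^ (p + 1) ≤ (p + 1) * y ^ p * (y - x) := by
  rcases hxy.eq_or_lt with rfl | hlt
  · simp
  have hderiv := Real.hasDerivAt_rpow_const (x := y) (p := p + 1) (Or.inr (by linarith))
  rw [add_sub_cancel_right] at hderiv
  have h := (convexOn_rpow (by linarith : (1 : ℝ) ≤ p + 1)).slope_le_of_hasDerivAt
    (mem_Ici.2 hx) (mem_Ici.2 (hx.trans hlt.le)) hlt hderiv
  rwa [slope_def_field, div_le_iff₀ (sub_pos.2 hlt)] at h

lemma mul_sub_le_rpow_add_one_sub_rpow_add_one (hp : 0 ≤ p) (hx : 0 ≤ x) (hxy : x ≤ y) :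
    (p + 1) * x ^ p * (y - x) ≤ y ^ (p + 1) - x ^ (p + 1) := by
  rcases hxy.eq_or_lt with rfl | hlt
  · simp
  have hderiv := Real.hasDerivAt_rpow_const (x := x) (p := p + 1) (Or.inr (by linarith))
  rw [add_sub_cancel_right] at hderiv
  have h := (convexOn_rpow (by linarith : (1 : ℝ) ≤ p + 1)).le_slope_of_hasDerivAt
    (mem_Ici.2 hx) (mem_Ici.2 (hx.trans hlt.le)) hlt hderiv
  rwa [slope_def_field, le_div_iff₀ (sub_pos.2 hlt)] at h

end RpowIncrements

lemma rpow_add_one_doubling {p x r : ℝ} (hp : 0 ≤ p) (hr : 0 ≤ r) (hrx : r ≤ x) :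
    (x + 2 * r) ^ (p + 1) - max (x - 2 * r) 0 ^ (p + 1) ≤
      (3 ^ p + 2) * ((x + r) ^ (p + 1) - (x - r) ^ (p + 1)) := by
  set s := max (x - 2 * r) 0
  have hs : 0 ≤ s := le_max_right _ _
  have hx : 0 ≤ x := hr.trans hrx
  have hsx : s ≤ x - r := max_le (by linarith) (by linarith)
  have hxs : x - 2 * r ≤ s := le_max_left _ _
  have hq : (0 : ℝ) ≤ p + 1 := by linarith
  have hright : (p + 1) * x ^ p * r ≤ (x + r) ^ (p + 1) - x ^ (p + 1) := by
    simpa using mul_sub_le_rpow_add_one_sub_rpow_add_one hp hx (le_add_of_nonneg_right hr)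
  have hleft : 0 ≤ x ^ (p + 1) - (x - r) ^ (p + 1) := by
    have := rpow_le_rpow (by linarith) (by linarith : x - r ≤ x) hq
    linarith
  have houter : (x + 2 * r) ^ (p + 1) - (x + r) ^ (p + 1) ≤ 3 ^ p * ((p + 1) * x ^ p * r) := by
    calc (x + 2 * r) ^ (p + 1) - (x + r) ^ (p + 1)
        ≤ (p + 1) * (x + 2 * r) ^ p * r := by
          simpa [show x + 2 * r - (x + r) = r by ring] using
            rpow_add_one_sub_rpow_add_one_le hp (by linarith) (by linarith : x + r ≤ x + 2 * r)
      _ ≤ (p + 1) * (3 * x) ^ p * r := by gcongr; linarith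
      _ = 3 ^ p * ((p + 1) * x ^ p * r) := by rw [mul_rpow (by norm_num) hx]; ring
  have hinner : (x - r) ^ (p + 1) - s ^ (p + 1) ≤ (p + 1) * x ^ p * r := by
    calc (x - r) ^ (p + 1) - s ^ (p + 1)
        ≤ (p + 1) * (x - r) ^ p * (x - r - s) := rpow_add_one_sub_rpow_add_one_le hp hs hsx
      _ ≤ (p + 1) * x ^ p * r := by
          gcongr <;> linarith
  have h3p : (0 : ℝ) ≤ 3 ^ p := by positivity
  linarith [mul_le_mul_of_nonneg_left hright h3p, mul_le_mul_of_nonneg_left hleft h3p]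

lemma lintegral_Ioo_rpow {p a b : ℝ} (hp : -1 < p) (ha : 0 ≤ a) (hab : a ≤ b) :
    ∫⁻ t in Ioo a b, ENNReal.ofReal (t ^ p) =
      ENNReal.ofReal ((b ^ (p + 1) - a ^ (p + 1)) / (p + 1)) := by
  have hint : IntegrableOn (fun t : ℝ => t ^ p) (Ioc a b) := by
    simpa [uIoc_of_le hab] using
      (intervalIntegral.intervalIntegrable_rpow' hp (a := a) (b := b)).def'
  have hnonneg : 0 ≤ᵐ[volume.restrict (Ioo a b)] fun t : ℝ => t ^ p := by
    filter_upwards [ae_restrict_mem measurableSet_Ioo] with t ht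
    exact rpow_nonneg (ha.trans ht.1.le) _
  rw [← ofReal_integral_eq_lintegral_ofReal (hint.mono_set Ioo_subset_Ioc_self) hnonneg,
    integral_Ioc_eq_integral_Ioo.symm, ← intervalIntegral.integral_of_le hab,
    integral_rpow (Or.inl hp)]

lemma le_and_mul_le_of_le_mul_min_one_inv {a x r : ℝ} (hr : 0 < r) (hx : 0 < x)
    (h : r ≤ a * min 1 x⁻¹) : r ≤ a ∧ r * x ≤ a := by
  have hm : 0 < min 1 x⁻¹ := lt_min one_pos (inv_pos.2 hx)
  have ha : 0 ≤ a := (pos_of_mul_pos_left (hr.trans_le h) hm.le).le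
  constructor
  · exact h.trans (mul_le_of_le_one_right ha (min_le_left _ _))
  · calc r * x ≤ a * x⁻¹ * x := by gcongr; exact h.trans (by gcongr; exact min_le_right _ _)
      _ = a := by field_simp

lemma exp_neg_sq_max_sub_two_mul_le {a x r : ℝ} (hrx : r ≤ x) (hra : r ≤ a)
    (hrxa : r * x ≤ a) :
    exp (-max (x - 2 * r) 0 ^ 2) ≤ exp (6 * a + 9 * a ^ 2) * exp (-(x + r) ^ 2) := by
  rw [← exp_add, exp_le_exp]
  rcases le_total (x - 2 * r) 0 with h | h
  · rw [max_eq_right h]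
    nlinarith
  · rw [max_eq_left h]
    nlinarith

noncomputable def gaussianPowerMeasure (c p : ℝ) : Measure ℝ :=
  (volume.restrict (Ioi (0 : ℝ))).withDensity
    fun t => ENNReal.ofReal (c * exp (-t ^ 2) * t ^ p)

lemma gammaMeasure_eq_gaussianPowerMeasure (α : ℝ) :
    gammaMeasure α = gaussianPowerMeasure (2 / Gamma (α + 1)) (2 * α + 1) := rfl

namespace gaussianPowerMeasure

variable {c p s b : ℝ}

lemma apply_Ioo (hs : 0 ≤ s) :
    gaussianPowerMeasure c p (Ioo s b) =
      ∫⁻ t in Ioo s b, ENNReal.ofReal (c * exp (-t ^ 2) * t ^ p) := by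
  rw [gaussianPowerMeasure, withDensity_apply _ measurableSet_Ioo,
    Measure.restrict_restrict measurableSet_Ioo, Ioo_inter_Ioi, max_eq_left hs]

lemma apply_Ioo_le (hc : 0 ≤ c) (hp : -1 < p) (hs : 0 ≤ s) (hsb : s ≤ b) :
    gaussianPowerMeasure c p (Ioo s b) ≤
      ENNReal.ofReal (c * exp (-s ^ 2) * ((b ^ (p + 1) - s ^ (p + 1)) / (p + 1))) := by
  have hle : ∀ t ∈ Ioo s b, ENNReal.ofReal (c * exp (-t ^ 2) * t ^ p) ≤
      ENNReal.ofReal (c * exp (-s ^ 2)) * ENNReal.ofReal (t ^ p) := fun t ht => by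
    have ht0 : 0 ≤ t := hs.trans ht.1.le
    rw [← ENNReal.ofReal_mul (by positivity)]
    gcongr
    nlinarith [ht.1]
  rw [apply_Ioo hs, ENNReal.ofReal_mul (by positivity), ← lintegral_Ioo_rpow hp hs hsb,
    ← lintegral_const_mul' _ _ ENNReal.ofReal_ne_top]
  exact setLIntegral_mono' measurableSet_Ioo hle

lemma le_apply_Ioo (hc : 0 ≤ c) (hp : -1 < p) (hs : 0 ≤ s) (hsb : s ≤ b) :
    ENNReal.ofReal (c * exp (-b ^ 2) * ((b ^ (p + 1) - s ^ (p + 1)) / (p + 1))) ≤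
      gaussianPowerMeasure c p (Ioo s b) := by
  have hle : ∀ t ∈ Ioo s b, ENNReal.ofReal (c * exp (-b ^ 2)) * ENNReal.ofReal (t ^ p) ≤
      ENNReal.ofReal (c * exp (-t ^ 2) * t ^ p) := fun t ht => by
    have ht0 : 0 ≤ t := hs.trans ht.1.le
    rw [← ENNReal.ofReal_mul (by positivity)]
    gcongr
    nlinarith [ht.2]
  rw [apply_Ioo hs, ENNReal.ofReal_mul (by positivity), ← lintegral_Ioo_rpow hp hs hsb,
    ← lintegral_const_mul' _ _ ENNReal.ofReal_ne_top]
  exact setLIntegral_mono' measurableSet_Ioo hle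

lemma doubling_of_le_mul_min_one_inv {a x r : ℝ} (hc : 0 ≤ c) (hp : 0 ≤ p) (hr : 0 < r)
    (hrx : r ≤ x) (hadm : r ≤ a * min 1 x⁻¹) :
    gaussianPowerMeasure c p (Ioo (x - 2 * r) (x + 2 * r) ∩ Ioi 0) ≤
      ENNReal.ofReal ((3 ^ p + 2) * exp (6 * a + 9 * a ^ 2)) *
        gaussianPowerMeasure c p (Ioo (x - r) (x + r)) := by
  obtain ⟨hra, hrxa⟩ := le_and_mul_le_of_le_mul_min_one_inv hr (hr.trans_le hrx) hadm
  set s := max (x - 2 * r) 0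
  have hs : 0 ≤ s := le_max_right _ _
  have hsb : s ≤ x + 2 * r := max_le (by linarith) (by linarith)
  have hgauss : exp (-s ^ 2) ≤ exp (6 * a + 9 * a ^ 2) * exp (-(x + r) ^ 2) :=
    exp_neg_sq_max_sub_two_mul_le hrx hra hrxa
  have hpower := rpow_add_one_doubling hp hr.le hrx
  have hbig : 0 ≤ (x + 2 * r) ^ (p + 1) - s ^ (p + 1) :=
    sub_nonneg.2 (rpow_le_rpow hs hsb (by linarith))
  have hdensity : c * exp (-s ^ 2) * (((x + 2 * r) ^ (p + 1) - s ^ (p + 1)) / (p + 1)) ≤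
      (3 ^ p + 2) * exp (6 * a + 9 * a ^ 2) *
        (c * exp (-(x + r) ^ 2) * (((x + r) ^ (p + 1) - (x - r) ^ (p + 1)) / (p + 1))) := by
    calc c * exp (-s ^ 2) * (((x + 2 * r) ^ (p + 1) - s ^ (p + 1)) / (p + 1))
        = c / (p + 1) * (exp (-s ^ 2) * ((x + 2 * r) ^ (p + 1) - s ^ (p + 1))) := by ring
      _ ≤ c / (p + 1) * ((exp (6 * a + 9 * a ^ 2) * exp (-(x + r) ^ 2)) *
            ((3 ^ p + 2) * ((x + r) ^ (p + 1) - (x - r) ^ (p + 1)))) := by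
          gcongr
      _ = _ := by ring
  rw [Ioo_inter_Ioi]
  calc gaussianPowerMeasure c p (Ioo s (x + 2 * r))
      ≤ ENNReal.ofReal (c * exp (-s ^ 2) * (((x + 2 * r) ^ (p + 1) - s ^ (p + 1)) / (p + 1))) :=
        apply_Ioo_le hc (by linarith) hs hsb
    _ ≤ ENNReal.ofReal ((3 ^ p + 2) * exp (6 * a + 9 * a ^ 2) *
          (c * exp (-(x + r) ^ 2) * (((x + r) ^ (p + 1) - (x - r) ^ (p + 1)) / (p + 1)))) :=
        ENNReal.ofReal_le_ofReal hdensity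
    _ = ENNReal.ofReal ((3 ^ p + 2) * exp (6 * a + 9 * a ^ 2)) * ENNReal.ofReal
          (c * exp (-(x + r) ^ 2) * (((x + r) ^ (p + 1) - (x - r) ^ (p + 1)) / (p + 1))) :=
        ENNReal.ofReal_mul (by positivity)
    _ ≤ _ := by
        gcongr
        exact le_apply_Ioo hc (by linarith) (by linarith) (by linarith)

end gaussianPowerMeasure

theorem gammaMeasure_doubling_on_admissible_general (α a : ℝ) (hα : -1/2 < α) :
    ∃ C : ℝ, 0 < C ∧ ∀ x r : ℝ, 0 < r → r ≤ x → r ≤ a * min 1 x⁻¹ →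
      gammaMeasure α (Set.Ioo (x - 2*r) (x + 2*r) ∩ Set.Ioi 0) ≤
        ENNReal.ofReal C * gammaMeasure α (Set.Ioo (x - r) (x + r)) := by
  have hc : 0 ≤ 2 / Gamma (α + 1) := (div_pos two_pos (Gamma_pos_of_pos (by linarith))).le
  refine ⟨(3 ^ (2 * α + 1) + 2) * exp (6 * a + 9 * a ^ 2), by positivity,
    fun x r hr hrx hadm => ?_⟩
  rw [gammaMeasure_eq_gaussianPowerMeasure]
  exact gaussianPowerMeasure.doubling_of_le_mul_min_one_inv hc (by linarith) hr hrx hadm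

theorem gammaMeasure_doubling_on_admissible (α a : ℝ) (hα : -1/2 < α) (ha : 0 < a) :
    ∃ C : ℝ, 0 < C ∧ ∀ x r : ℝ, 0 < r → r ≤ x → r ≤ a * min 1 x⁻¹ →
      gammaMeasure α (Set.Ioo (x - 2*r) (x + 2*r) ∩ Set.Ioi 0) ≤
        ENNReal.ofReal C * gammaMeasure α (Set.Ioo (x - r) (x + r)) :=
  gammaMeasure_doubling_on_admissible_general α a hα
end
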